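/- Let (X_i)_{i≥0} be a stationary sequence of E-valued random variables and φ : E → ℝ measurable with φ(X_0) ∈ L^4. Then for every n ≥ 1: E[(Σ_{i=1}^n φ(X_i))^4] ≤ 4!·n·Σ_{i,j,k ≥ 0, i+j+k ≤ n} |E[φ(X_0)·φ(X_i)·φ(X_{i+j})·φ(X_{i+j+k})]|. -/

import Mathlib

/-!
Expanding the fourth power gives `∑ E[Y_{p₀} Y_{p₁} Y_{p₂} Y_{p₃}]` over `p ∈ {1,…,n}⁴`, where
`Y_i = φ(X_i)`; Hölder's inequality makes every term finite. Each index tuple is a permutation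
of an increasing chain `a ≤ a + i ≤ a + i + j ≤ a + i + j + k` with `a ∈ {1,…,n}` and
`i + j + k ≤ n`, and by stationarity the corresponding moment does not depend on `a`. Hence each
gap triple `(i, j, k)` is hit at most `4! · n` times.
-/

open MeasureTheory Finset ProbabilityTheory

lemma Finset.sum_le_sum_comp_of_subset_image {ι κ N : Type*} [AddCommMonoid N] [Preorder N]
    [AddLeftMono N] [DecidableEq κ] {s : Finset ι} {t : Finset κ} {g : ι → κ} {f : κ → N}
    (hf : ∀ b ∈ s.image g, 0 ≤ f b) (ht : t ⊆ s.image g) :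
    ∑ b ∈ t, f b ≤ ∑ a ∈ s, f (g a) :=
  (sum_le_sum_of_subset_of_nonneg ht fun b hb _ => hf b hb).trans (sum_image_le_of_nonneg hf)

section Moments

variable {Ω ι : Type*} [MeasurableSpace Ω] {μ : Measure Ω}

lemma MeasureTheory.integrable_prod_of_memLp_card {κ : Type*} [Fintype κ] [Nonempty κ]
    {f : κ → Ω → ℝ} (hf : ∀ i, MemLp (f i) (Fintype.card κ) μ) :
    Integrable (fun ω => ∏ i, f i ω) μ := by
  have hexp : (∑ _i : κ, ((Fintype.card κ : ENNReal))⁻¹)⁻¹ = 1 := by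
    rw [sum_const, card_univ, nsmul_eq_mul, ENNReal.mul_inv_cancel (by simp) (by simp), inv_one]
  rw [← memLp_one_iff_integrable, ← hexp]
  exact MemLp.prod' fun i _ => hf i

lemma MeasureTheory.integral_sum_pow_eq_sum_integral_prod {k : ℕ} (hk : k ≠ 0) {s : Finset ι}
    {f : ι → Ω → ℝ} (hf : ∀ i ∈ s, MemLp (f i) k μ) :
    ∫ ω, (∑ i ∈ s, f i ω) ^ k ∂μ
      = ∑ p ∈ Fintype.piFinset (fun _ : Fin k => s), ∫ ω, ∏ j, f (p j) ω ∂μ := by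
  have : Nonempty (Fin k) := ⟨⟨0, Nat.pos_of_ne_zero hk⟩⟩
  simp_rw [sum_pow']
  refine integral_finsetSum _ fun p hp => integrable_prod_of_memLp_card fun j => ?_
  simpa using hf _ (Fintype.mem_piFinset.mp hp j)

end Moments

def chainOfGaps (a : ℕ) (v : ℕ × ℕ × ℕ) : Fin 4 → ℕ :=
  ![a, a + v.1, a + v.1 + v.2.1, a + v.1 + v.2.1 + v.2.2]

lemma chainOfGaps_apply_eq_add (a : ℕ) (v : ℕ × ℕ × ℕ) (i : Fin 4) :
    chainOfGaps a v i = chainOfGaps 0 v i + a := by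
  fin_cases i <;> simp [chainOfGaps] <;> omega

def gapTriples (n : ℕ) : Finset (ℕ × ℕ × ℕ) :=
  (range (n + 1) ×ˢ range (n + 1) ×ˢ range (n + 1)).filter fun v => v.1 + v.2.1 + v.2.2 ≤ n

lemma sum_gapTriples {M : Type*} [AddCommMonoid M] (n : ℕ) (f : ℕ × ℕ × ℕ → M) :
    ∑ v ∈ gapTriples n, f v = ∑ i ∈ range (n + 1), ∑ j ∈ range (n + 1), ∑ k ∈ range (n + 1),
      if i + j + k ≤ n then f (i, j, k) else 0 := by
  simp only [gapTriples, sum_filter, sum_product]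

lemma piFinset_subset_image_chainOfGaps (n : ℕ) :
    Fintype.piFinset (fun _ : Fin 4 => Icc 1 n) ⊆ (univ ×ˢ Icc 1 n ×ˢ gapTriples n).image
      fun x : Equiv.Perm (Fin 4) × ℕ × (ℕ × ℕ × ℕ) => chainOfGaps x.2.1 x.2.2 ∘ x.1 := by
  intro p hp
  set q := p ∘ Tuple.sort p
  have hmono : Monotone q := Tuple.monotone_sort p
  have h01 : q 0 ≤ q 1 := hmono (by decide)
  have h12 : q 1 ≤ q 2 := hmono (by decide)
  have h23 : q 2 ≤ q 3 := hmono (by decide)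
  have hq : ∀ i, q i ∈ Icc 1 n := fun i => Fintype.mem_piFinset.mp hp _
  have hq0 := mem_Icc.mp (hq 0)
  have hq3 := mem_Icc.mp (hq 3)
  set v := (q 1 - q 0, q 2 - q 1, q 3 - q 2)
  have hv : v ∈ gapTriples n := by
    simp only [v, gapTriples, mem_filter, mem_product, mem_range]
    omega
  have hchain : chainOfGaps (q 0) v = q := by
    funext i
    fin_cases i <;> simp [v, chainOfGaps] <;> omega
  refine mem_image.mpr ⟨((Tuple.sort p)⁻¹, q 0, v), by simp [hq 0, hv], ?_⟩
  funext i
  rw [Function.comp_apply, hchain]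
  simp [q]

section Stationary

variable {E Ω : Type*} [MeasurableSpace E] [MeasurableSpace Ω] {μ : Measure Ω}
  {X : ℕ → Ω → E} {φ : E → ℝ}

def IsStationarySeq (μ : Measure Ω) (X : ℕ → Ω → E) : Prop :=
  ∀ m : ℕ, Measure.map (fun ω i => X (i + m) ω) μ = Measure.map (fun ω i => X i ω) μ

lemma IsStationarySeq.identDistrib_shift (hStat : IsStationarySeq μ X) (hX : ∀ n, Measurable (X n))
    (m : ℕ) : IdentDistrib (fun ω i => X (i + m) ω) (fun ω i => X i ω) μ μ where
  aemeasurable_fst := (measurable_pi_lambda _ fun i => hX (i + m)).aemeasurable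
  aemeasurable_snd := (measurable_pi_lambda _ hX).aemeasurable
  map_eq := hStat m

lemma IsStationarySeq.memLp (hStat : IsStationarySeq μ X) (hX : ∀ n, Measurable (X n))
    (hφ : Measurable φ) {p : ENNReal} (h0 : MemLp (fun ω => φ (X 0 ω)) p μ) (m : ℕ) :
    MemLp (fun ω => φ (X m ω)) p μ := by
  have h := ((hStat.identDistrib_shift hX m).comp (u := fun y : ℕ → E => φ (y 0))
    (by fun_prop)).memLp_iff (p := p)
  simpa [Function.comp_def] using h.mpr h0

lemma IsStationarySeq.integral_prod_add (hStat : IsStationarySeq μ X) (hX : ∀ n, Measurable (X n))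
    (hφ : Measurable φ) {κ : Type*} [Fintype κ] (q : κ → ℕ) (m : ℕ) :
    ∫ ω, ∏ i, φ (X (q i + m) ω) ∂μ = ∫ ω, ∏ i, φ (X (q i) ω) ∂μ :=
  ((hStat.identDistrib_shift hX m).comp (u := fun y : ℕ → E => ∏ i, φ (y (q i)))
    (by fun_prop)).integral_eq

lemma IsStationarySeq.integral_prod_chainOfGaps_comp_perm (hStat : IsStationarySeq μ X)
    (hX : ∀ n, Measurable (X n)) (hφ : Measurable φ) (σ : Equiv.Perm (Fin 4)) (a : ℕ)
    (v : ℕ × ℕ × ℕ) :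
    ∫ ω, ∏ i, φ (X ((chainOfGaps a v ∘ σ) i) ω) ∂μ
      = ∫ ω, φ (X 0 ω) * φ (X v.1 ω) * φ (X (v.1 + v.2.1) ω)
          * φ (X (v.1 + v.2.1 + v.2.2) ω) ∂μ := by
  calc ∫ ω, ∏ i, φ (X ((chainOfGaps a v ∘ σ) i) ω) ∂μ
      = ∫ ω, ∏ i, φ (X (chainOfGaps 0 v i + a) ω) ∂μ := by
        congr 1 with ω
        simp only [Function.comp_apply, chainOfGaps_apply_eq_add a v]
        exact Equiv.prod_comp σ fun i => φ (X (chainOfGaps 0 v i + a) ω)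
    _ = _ := by
        rw [hStat.integral_prod_add hX hφ]
        simp [chainOfGaps, Fin.prod_univ_four]

end Stationary

theorem stmt_4_general
    {E : Type*} [MeasurableSpace E]
    {Ω : Type*} [MeasurableSpace Ω]
    (μ : Measure Ω)
    (X : ℕ → Ω → E)
    (hXmeas : ∀ n, Measurable (X n))
    (hStat : ∀ m : ℕ, Measure.map (fun ω => fun i => X (i + m) ω) μ
      = Measure.map (fun ω => fun i => X i ω) μ)
    (φ : E → ℝ) (hφmeas : Measurable φ)
    (hφ4 : MemLp (fun ω => φ (X 0 ω)) 4 μ)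
    (n : ℕ) :
    ∫ ω, (∑ i ∈ Finset.Icc 1 n, φ (X i ω)) ^ 4 ∂μ ≤
      (24 : ℝ) * n * ∑ i ∈ Finset.range (n + 1), ∑ j ∈ Finset.range (n + 1),
        ∑ k ∈ Finset.range (n + 1),
          (if i + j + k ≤ n then
            |∫ ω, φ (X 0 ω) * φ (X i ω) * φ (X (i + j) ω) * φ (X (i + j + k) ω) ∂μ|
          else 0) := by
  set G : ℕ × ℕ × ℕ → ℝ := fun v =>
    |∫ ω, φ (X 0 ω) * φ (X v.1 ω) * φ (X (v.1 + v.2.1) ω) * φ (X (v.1 + v.2.1 + v.2.2) ω) ∂μ|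
  calc ∫ ω, (∑ i ∈ Icc 1 n, φ (X i ω)) ^ 4 ∂μ
      = ∑ p ∈ Fintype.piFinset (fun _ : Fin 4 => Icc 1 n), ∫ ω, ∏ i, φ (X (p i) ω) ∂μ :=
        integral_sum_pow_eq_sum_integral_prod four_ne_zero fun i _ =>
          IsStationarySeq.memLp hStat hXmeas hφmeas hφ4 i
    _ ≤ ∑ p ∈ Fintype.piFinset (fun _ : Fin 4 => Icc 1 n), |∫ ω, ∏ i, φ (X (p i) ω) ∂μ| :=
        sum_le_sum fun p _ => le_abs_self _
    _ ≤ ∑ x ∈ (univ : Finset (Equiv.Perm (Fin 4))) ×ˢ Icc 1 n ×ˢ gapTriples n,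
          |∫ ω, ∏ i, φ (X ((chainOfGaps x.2.1 x.2.2 ∘ x.1) i) ω) ∂μ| :=
        sum_le_sum_comp_of_subset_image (fun _ _ => abs_nonneg _)
          (piFinset_subset_image_chainOfGaps n)
    _ = ∑ x ∈ (univ : Finset (Equiv.Perm (Fin 4))) ×ˢ Icc 1 n ×ˢ gapTriples n, G x.2.2 := by
        simp only [IsStationarySeq.integral_prod_chainOfGaps_comp_perm hStat hXmeas hφmeas, G]
    _ = 24 * n * ∑ v ∈ gapTriples n, G v := by
        simp only [sum_product, sum_const, card_univ, Fintype.card_perm, Fintype.card_fin,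
          Nat.card_Icc, nsmul_eq_mul]
        norm_num [Nat.factorial]
        ring
    _ = _ := by rw [sum_gapTriples]

theorem stmt_4
    {E : Type*} [MeasurableSpace E]
    {Ω : Type*} [MeasurableSpace Ω]
    (μ : Measure Ω) [IsProbabilityMeasure μ]
    (X : ℕ → Ω → E)
    (hXmeas : ∀ n, Measurable (X n))
    (hStat : ∀ m : ℕ, Measure.map (fun ω => fun i => X (i + m) ω) μ
      = Measure.map (fun ω => fun i => X i ω) μ)
    (φ : E → ℝ) (hφmeas : Measurable φ)
    (hφ4 : MemLp (fun ω => φ (X 0 ω)) 4 μ)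
    (n : ℕ) (hn : 1 ≤ n) :
    ∫ ω, (∑ i ∈ Finset.Icc 1 n, φ (X i ω)) ^ 4 ∂μ ≤
      (24 : ℝ) * n * ∑ i ∈ Finset.range (n + 1), ∑ j ∈ Finset.range (n + 1),
        ∑ k ∈ Finset.range (n + 1),
          (if i + j + k ≤ n then
            |∫ ω, φ (X 0 ω) * φ (X i ω) * φ (X (i + j) ω) * φ (X (i + j + k) ω) ∂μ|
          else 0) :=
  stmt_4_general μ X hXmeas hStat φ hφmeas hφ4 n
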